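/- If W is the product of two independent real zero-mean Gaussian random variables with standard deviations σ₁ and σ₂, then W has pdf f_W(w) = K₀(|w|/(σ₁σ₂))/(π σ₁ σ₂), where K₀ is the modified Bessel function of the second kind of order 0. -/

import Mathlib

/-!
By independence, the law of `A * B` is the multiplicative convolution of the two Gaussian laws,
whose density at `w` is `∫ g₁(x) g₂(w/x) dx/|x|`. For `w ≠ 0` the exponent of the integrand is
`(a/2) ((x/c)² + (c/x)²)` with `a = |w|/(σ₁σ₂)` and `c² = σ₁|w|/σ₂`, and the substitution
`x = c e^{t/2}` turns it into `a cosh t` and `dx/x` into `dt/2`; by symmetry in `x` and in `t`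
what remains is `∫₀^∞ e^{-a cosh t} dt = K₀(a)`.
-/

open MeasureTheory ProbabilityTheory Real

/-- The modified Bessel function of the second kind of order 0,
`K₀(x) = ∫₀^∞ e^{-x cosh t} dt`. -/
noncomputable def besselK0 (x : ℝ) : ℝ := ∫ t in Set.Ioi (0 : ℝ), Real.exp (-x * Real.cosh t)

open Set

open scoped ENNReal

lemma withDensity_preimage_mul_left {h : ℝ → ℝ≥0∞} {x : ℝ} (hx : x ≠ 0) {s : Set ℝ}
    (hs : MeasurableSet s) :
    volume.withDensity h ((x * ·) ⁻¹' s) = ∫⁻ w in s, h (w / x) * ENNReal.ofReal (|x|⁻¹) := by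
  have himage : (· / x) '' s = (x * ·) ⁻¹' s :=
    congrFun (image_eq_preimage_of_inverse (fun z => mul_div_cancel₀ z hx)
      (fun y => mul_div_cancel_left₀ y hx)) s
  rw [withDensity_apply _ (measurable_const_mul x hs), ← himage,
    lintegral_image_eq_lintegral_abs_deriv_mul hs
      (fun z _ => (hasDerivAt_id' z).div_const x |>.hasDerivWithinAt)
      (fun a _ b _ hab => (div_left_inj' hx).mp hab)]
  simp only [one_div, abs_inv, mul_comm]

lemma withDensity_mconv_withDensity {g h : ℝ → ℝ≥0∞} (hg : Measurable g) (hh : Measurable h) :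
    volume.withDensity g ∗ₘ volume.withDensity h
      = volume.withDensity (fun w => ∫⁻ x, g x * h (w / x) * ENNReal.ofReal (|x|⁻¹)) := by
  have hmul : Measurable (fun p : ℝ × ℝ => p.1 * p.2) := measurable_mul
  ext s hs
  have hslice : ∀ᵐ x : ℝ, g x * volume.withDensity h ((x * ·) ⁻¹' s)
      = ∫⁻ w in s, g x * h (w / x) * ENNReal.ofReal (|x|⁻¹) := by
    filter_upwards [Measure.ae_ne volume 0] with x hx
    simp only [mul_assoc]
    rw [lintegral_const_mul _ (by fun_prop), withDensity_preimage_mul_left hx hs]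
  rw [Measure.mconv, Measure.map_apply hmul hs, Measure.prod_apply (hmul hs),
    lintegral_withDensity_eq_lintegral_mul volume hg (measurable_measure_prodMk_left (hmul hs)),
    withDensity_apply _ hs, ← lintegral_lintegral_swap (by fun_prop)]
  exact lintegral_congr_ae hslice

lemma lintegral_comp_abs {f : ℝ → ℝ≥0∞} : ∫⁻ x, f |x| = 2 * ∫⁻ x in Ioi 0, f x := by
  have hIoi : ∫⁻ x in Ioi 0, f |x| = ∫⁻ x in Ioi 0, f x :=
    setLIntegral_congr_fun measurableSet_Ioi fun x hx => by rw [abs_of_pos hx]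
  have hIio : ∫⁻ x in Iio 0, f |x| = ∫⁻ x in Ioi 0, f x := by
    have himage : Neg.neg '' Ioi (0 : ℝ) = Iio 0 := by
      rw [image_neg_eq_neg, neg_Ioi, neg_zero]
    rw [← himage, lintegral_image_eq_lintegral_abs_deriv_mul measurableSet_Ioi
      (fun x _ => (hasDerivAt_neg x).hasDerivWithinAt) neg_injective.injOn, ← hIoi]
    simp only [abs_neg, abs_one, ENNReal.ofReal_one, one_mul]
  have hsplit : ∫⁻ x, f |x| = ∫⁻ x in Iio 0 ∪ Ioi 0, f |x| := by
    rw [Iio_union_Ioi, restrict_compl_singleton]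
  rw [hsplit, lintegral_union measurableSet_Ioi
    ((Iio_disjoint_Ici le_rfl).mono_right Ioi_subset_Ici_self), hIio, hIoi, two_mul]

lemma integrableOn_exp_neg_mul_cosh_Ioi {a : ℝ} (ha : 0 < a) :
    IntegrableOn (fun t => exp (-a * cosh t)) (Ioi 0) := by
  refine (exp_neg_integrableOn_Ioi 0 ha).mono' (by fun_prop) ?_
  filter_upwards [ae_restrict_mem measurableSet_Ioi] with t ht
  have hcosh : t ≤ cosh t := (self_le_sinh_iff.mpr (le_of_lt ht)).trans (sinh_lt_cosh t).le
  rw [norm_of_nonneg (exp_pos _).le, exp_le_exp]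
  nlinarith

lemma ofReal_besselK0 {a : ℝ} (ha : 0 < a) :
    ENNReal.ofReal (besselK0 a) = ∫⁻ t in Ioi 0, ENNReal.ofReal (exp (-a * cosh t)) :=
  ofReal_integral_eq_lintegral_ofReal (integrableOn_exp_neg_mul_cosh_Ioi ha)
    (Filter.Eventually.of_forall fun _ => (exp_pos _).le)

lemma lintegral_exp_neg_mul_cosh {a : ℝ} (ha : 0 < a) :
    ∫⁻ t, ENNReal.ofReal (exp (-a * cosh t)) = 2 * ENNReal.ofReal (besselK0 a) := by
  simp_rw [ofReal_besselK0 ha, ← lintegral_comp_abs, cosh_abs]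

lemma range_mul_exp_half {c : ℝ} (hc : 0 < c) : range (fun t => c * exp (t / 2)) = Ioi 0 := by
  ext x
  constructor
  · rintro ⟨t, rfl⟩
    exact mul_pos hc (exp_pos _)
  · intro hx
    refine ⟨2 * log (x / c), ?_⟩
    change c * exp (2 * log (x / c) / 2) = x
    rw [mul_div_cancel_left₀ _ two_ne_zero, exp_log (div_pos hx hc), mul_div_cancel₀ _ hc.ne']

lemma setLIntegral_Ioi_exp_neg_half_mul_sq_div_add_div_sq {a c : ℝ} (ha : 0 < a) (hc : 0 < c) :
    ∫⁻ x in Ioi 0, ENNReal.ofReal (exp (-(a / 2) * (x ^ 2 / c ^ 2 + c ^ 2 / x ^ 2)) / x)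
      = ENNReal.ofReal (besselK0 a) := by
  have hpointwise : ∀ t : ℝ, ENNReal.ofReal |c * (exp (t / 2) * (1 / 2))| *
      ENNReal.ofReal (exp (-(a / 2) *
        ((c * exp (t / 2)) ^ 2 / c ^ 2 + c ^ 2 / (c * exp (t / 2)) ^ 2)) / (c * exp (t / 2)))
      = ENNReal.ofReal (exp (-a * cosh t)) / 2 := by
    intro t
    have hexp : exp (t / 2) ^ 2 = exp t := by rw [← exp_nat_mul]; ring_nf
    rw [← ENNReal.ofReal_mul (abs_nonneg _), abs_of_pos (by positivity),
      ← ENNReal.ofReal_ofNat 2, ← ENNReal.ofReal_div_of_pos two_pos, cosh_eq, exp_neg, ← hexp]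
    congr 1
    field_simp
  have hderiv : ∀ t, HasDerivAt (fun t => c * exp (t / 2)) (c * (exp (t / 2) * (1 / 2))) t :=
    fun t => ((hasDerivAt_id' t).div_const 2).exp.const_mul c
  have hinj : InjOn (fun t => c * exp (t / 2)) univ := fun s _ t _ hst => by
    simpa [hc.ne'] using hst
  rw [← range_mul_exp_half hc, ← image_univ, lintegral_image_eq_lintegral_abs_deriv_mul
    MeasurableSet.univ (fun t _ => (hderiv t).hasDerivWithinAt) hinj, Measure.restrict_univ]
  simp_rw [hpointwise, div_eq_mul_inv]
  rw [lintegral_mul_const _ (by fun_prop), lintegral_exp_neg_mul_cosh ha, mul_comm,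
    ← mul_assoc, ENNReal.inv_mul_cancel two_ne_zero ENNReal.ofNat_ne_top, one_mul]

lemma gaussianPDFReal_zero_sq {σ : ℝ} (hσ : 0 < σ) (x : ℝ) :
    gaussianPDFReal 0 (σ ^ 2).toNNReal x = (√(2 * π) * σ)⁻¹ * exp (-(x ^ 2 / (2 * σ ^ 2))) := by
  rw [gaussianPDFReal, Real.coe_toNNReal _ (sq_nonneg σ), sqrt_mul (by positivity),
    sqrt_sq hσ.le, sub_zero, neg_div]

lemma gaussianPDFReal_mul_gaussianPDFReal_div {σ₁ σ₂ w x : ℝ} (hσ₁ : 0 < σ₁) (hσ₂ : 0 < σ₂)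
    (hw : w ≠ 0) (hx : x ≠ 0) :
    gaussianPDFReal 0 (σ₁ ^ 2).toNNReal x * gaussianPDFReal 0 (σ₂ ^ 2).toNNReal (w / x)
      = (2 * π * σ₁ * σ₂)⁻¹ * exp (-(|w| / (σ₁ * σ₂) / 2) *
          (x ^ 2 / √(σ₁ * |w| / σ₂) ^ 2 + √(σ₁ * |w| / σ₂) ^ 2 / x ^ 2)) := by
  rw [gaussianPDFReal_zero_sq hσ₁, gaussianPDFReal_zero_sq hσ₂, mul_mul_mul_comm, ← exp_add,
    ← mul_inv, sq_sqrt (by positivity)]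
  congr 2
  · rw [mul_mul_mul_comm, mul_self_sqrt (by positivity)]
    ring
  · rw [div_pow, ← sq_abs w]
    field_simp
    ring

lemma lintegral_gaussianPDF_mul_gaussianPDF_div {σ₁ σ₂ w : ℝ} (hσ₁ : 0 < σ₁) (hσ₂ : 0 < σ₂)
    (hw : w ≠ 0) :
    ∫⁻ x, gaussianPDF 0 (σ₁ ^ 2).toNNReal x * gaussianPDF 0 (σ₂ ^ 2).toNNReal (w / x)
        * ENNReal.ofReal (|x|⁻¹)
      = ENNReal.ofReal (besselK0 (|w| / (σ₁ * σ₂)) / (π * σ₁ * σ₂)) := by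
  have hw' : 0 < |w| := abs_pos.mpr hw
  set a := |w| / (σ₁ * σ₂)
  set c := √(σ₁ * |w| / σ₂)
  set f : ℝ → ℝ≥0∞ := fun y => ENNReal.ofReal (exp (-(a / 2) * (y ^ 2 / c ^ 2 + c ^ 2 / y ^ 2)) / y)
  have hintegrand : ∀ᵐ x : ℝ, gaussianPDF 0 (σ₁ ^ 2).toNNReal x
      * gaussianPDF 0 (σ₂ ^ 2).toNNReal (w / x) * ENNReal.ofReal (|x|⁻¹)
        = ENNReal.ofReal (2 * π * σ₁ * σ₂)⁻¹ * f |x| := by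
    filter_upwards [Measure.ae_ne volume 0] with x hx
    simp only [gaussianPDF, f, sq_abs]
    rw [← ENNReal.ofReal_mul (gaussianPDFReal_nonneg _ _ _),
      gaussianPDFReal_mul_gaussianPDFReal_div hσ₁ hσ₂ hw hx, ← ENNReal.ofReal_mul (by positivity),
      ← ENNReal.ofReal_mul (by positivity), mul_assoc, ← div_eq_mul_inv]
  rw [lintegral_congr_ae hintegrand, lintegral_const_mul _ (by fun_prop), lintegral_comp_abs,
    setLIntegral_Ioi_exp_neg_half_mul_sq_div_add_div_sq (by positivity)
      (sqrt_pos.mpr (by positivity)), ← ENNReal.ofReal_ofNat 2,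
    ← ENNReal.ofReal_mul zero_le_two, ← ENNReal.ofReal_mul (by positivity)]
  congr 1
  field_simp

/-- If `W` is the product of two independent real zero-mean Gaussian random variables with
standard deviations `σ₁` and `σ₂`, then `W` has pdf
`w ↦ K₀(|w|/(σ₁σ₂)) / (π σ₁ σ₂)`. -/
theorem pdf_product_of_independent_gaussians
    {Ω : Type*} [MeasurableSpace Ω] (μ : Measure Ω) [IsProbabilityMeasure μ]
    (A B : Ω → ℝ) (σ₁ σ₂ : ℝ) (hσ₁ : 0 < σ₁) (hσ₂ : 0 < σ₂)
    (hA : Measurable A) (hB : Measurable B)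
    (hindep : IndepFun A B μ)
    (hAdist : Measure.map A μ = gaussianReal 0 ((σ₁ ^ 2).toNNReal))
    (hBdist : Measure.map B μ = gaussianReal 0 ((σ₂ ^ 2).toNNReal)) :
    Measure.map (fun ω => A ω * B ω) μ
      = volume.withDensity (fun w =>
          ENNReal.ofReal (besselK0 (|w| / (σ₁ * σ₂)) / (Real.pi * σ₁ * σ₂))) := by
  have hv₁ : (σ₁ ^ 2).toNNReal ≠ 0 := by simpa using hσ₁.ne'
  have hv₂ : (σ₂ ^ 2).toNNReal ≠ 0 := by simpa using hσ₂.ne'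
  rw [show (fun ω => A ω * B ω) = A * B from rfl, hindep.map_mul_eq_map_mconv_map hA hB, hAdist,
    hBdist, gaussianReal_of_var_ne_zero 0 hv₁, gaussianReal_of_var_ne_zero 0 hv₂,
    withDensity_mconv_withDensity (measurable_gaussianPDF 0 _) (measurable_gaussianPDF 0 _)]
  refine withDensity_congr_ae ?_
  filter_upwards [Measure.ae_ne volume 0] with w hw
  exact lintegral_gaussianPDF_mul_gaussianPDF_div hσ₁ hσ₂ hw
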